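/- arXiv:1009.2037 — 3 statements merged into one kernel-verified Lean document; each statement's English description precedes it below -/
import Mathlib

section
/- Define a linear operator D on the algebra of symmetric functions by D S_ν = -|ν| S_ν + ∑_{□∈ν⁻} (z+c(□))(z'+c(□)) S_{ν∖□}, where ν⁻ is the set of corner boxes of ν. Then each Laguerre symmetric function L_ν = ∑_{μ⊆ν} C(ν,μ;z,z') S_μ satisfies D L_ν = -|ν| L_ν. -/
open scoped BigOperators

/-- `∏_{□∈s} (z + c(□))(z' + c(□))` where `c((i,j)) = j - i`. -/
noncomputable def contentProd {R : Type*} [CommRing R] (z z' : R) (s : Finset (ℕ × ℕ)) : R :=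
  ∏ b ∈ s, ((z + (((b.2 : ℤ) - (b.1 : ℤ) : ℤ) : R)) * (z' + (((b.2 : ℤ) - (b.1 : ℤ) : ℤ) : R)))

/-- Number of standard Young tableaux of skew shape `ν/μ`, i.e. of saturated chains
from `μ` to `ν` in the Young lattice. -/
noncomputable def dimSkew (μ ν : YoungDiagram) : ℕ :=
  Nat.card {c : ℕ → YoungDiagram //
    c 0 = μ ∧
    (∀ i, i < ν.card - μ.card → c i ≤ c (i + 1) ∧ (c (i + 1)).card = (c i).card + 1) ∧
    ∀ i, ν.card - μ.card ≤ i → c i = ν}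

/-- Elementary symmetric function `e_k` as a generator of `Λ = ℂ[e₁,e₂,…]`,
with `e_0 = 1` and `e_k = 0` for `k < 0`. -/
noncomputable def eGen (k : ℤ) : MvPolynomial ℕ ℂ :=
  if k < 0 then 0 else if k = 0 then 1 else MvPolynomial.X (k.toNat - 1)

/-- Schur function via the Nägelsbach–Kostka formula `S_ν = det[e_{ν'_i - i + j}]`. -/
noncomputable def SchurF (ν : YoungDiagram) : MvPolynomial ℕ ℂ :=
  Matrix.det (Matrix.of fun i j : Fin (ν.rowLen 0) =>
    eGen ((ν.colLen i : ℤ) - (i : ℤ) + (j : ℤ)))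

/-- Coefficient of the Laguerre symmetric functions in the Schur basis. -/
noncomputable def LagC (z z' : ℂ) (ν μ : YoungDiagram) : ℂ :=
  (-1) ^ (ν.card - μ.card) * (dimSkew μ ν : ℂ) / (Nat.factorial (ν.card - μ.card) : ℂ)
    * contentProd z z' (ν.cells \ μ.cells)

/-- The Laguerre symmetric function `𝕃_ν`. -/
noncomputable def LaguerreSF (z z' : ℂ) (ν : YoungDiagram) : MvPolynomial ℕ ℂ :=
  ∑ᶠ (μ : YoungDiagram) (_ : μ ≤ ν), LagC z z' ν μ • SchurF μ

/-!
Expanding `D 𝕃_ν` in the Schur basis, the coefficient of `S_λ` (`λ ⊆ ν`) is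
`-|λ| C(ν,λ) + ∑_μ C(ν,μ) ∏_{□ ∈ μ/λ} (z+c(□))(z'+c(□))`, over the `μ ⊆ ν` with one box more
than `λ`. The content products combine into the one over `ν/λ`, and splitting off the first step
of a saturated chain gives the branching rule `dim ν/λ = ∑_μ dim ν/μ`; so the sum is
`(-1)^(k-1) dim ν/λ / (k-1)! · ∏_{ν/λ} = -k C(ν,λ)` with `k = |ν| - |λ|`, and the coefficient
is `-|ν| C(ν,λ)`.
-/

open Finset

namespace YoungDiagram

instance : DecidableLE YoungDiagram := fun _ _ => decidable_of_iff _ cells_subset_iff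

theorem card_le_card_of_le {μ ν : YoungDiagram} (h : μ ≤ ν) : μ.card ≤ ν.card :=
  card_le_card (cells_subset_iff.2 h)

theorem finite_setOf_le (ν : YoungDiagram) : {μ : YoungDiagram | μ ≤ ν}.Finite :=
  ((Set.finite_Iic ν.cells).preimage fun _ _ _ _ h => YoungDiagram.ext h).subset
    fun _ hμ => cells_subset_iff.2 hμ

noncomputable instance : LocallyFiniteOrderBot YoungDiagram :=
  .ofIic' YoungDiagram (fun ν => (finite_setOf_le ν).toFinset) fun _ _ => Set.Finite.mem_toFinset _

noncomputable def oneBoxExtensions (ν l : YoungDiagram) : Finset YoungDiagram :=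
  {μ ∈ Iic ν | l ≤ μ ∧ l.card + 1 = μ.card}

theorem mem_oneBoxExtensions {ν l μ : YoungDiagram} :
    μ ∈ oneBoxExtensions ν l ↔ μ ≤ ν ∧ l ≤ μ ∧ l.card + 1 = μ.card := by
  rw [oneBoxExtensions, mem_filter, mem_Iic]

end YoungDiagram

open YoungDiagram

def IsSaturatedChain (μ ν : YoungDiagram) (c : ℕ → YoungDiagram) : Prop :=
  c 0 = μ ∧
    (∀ i, i < ν.card - μ.card → c i ≤ c (i + 1) ∧ (c (i + 1)).card = (c i).card + 1) ∧
    ∀ i, ν.card - μ.card ≤ i → c i = ν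

theorem dimSkew_eq_card (μ ν : YoungDiagram) :
    dimSkew μ ν = Nat.card {c // IsSaturatedChain μ ν c} := rfl

namespace IsSaturatedChain

variable {l μ ν : YoungDiagram} {c : ℕ → YoungDiagram}

theorem le (h : IsSaturatedChain μ ν c) (i : ℕ) : c i ≤ ν := by
  have mono : Monotone c := monotone_nat_of_le_succ fun j => by
    rcases lt_or_ge j (ν.card - μ.card) with hj | hj
    · exact (h.2.1 j hj).1
    · rw [h.2.2 j hj, h.2.2 (j + 1) (by omega)]
  calc c i ≤ c (max i (ν.card - μ.card)) := mono (le_max_left _ _)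
    _ = ν := h.2.2 _ (le_max_right _ _)

theorem one_mem_oneBoxExtensions (h : IsSaturatedChain l ν c) (hlt : l.card < ν.card) :
    c 1 ∈ oneBoxExtensions ν l := by
  obtain ⟨hle, hcard⟩ := h.2.1 0 (by omega)
  rw [h.1] at hle hcard
  exact YoungDiagram.mem_oneBoxExtensions.2 ⟨h.le 1, hle, hcard.symm⟩

theorem tail (h : IsSaturatedChain l ν c) (hlt : l.card < ν.card) :
    IsSaturatedChain (c 1) ν (fun i => c (i + 1)) := by
  have hc1 := YoungDiagram.mem_oneBoxExtensions.1 (h.one_mem_oneBoxExtensions hlt)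
  have hcard := card_le_card_of_le hc1.1
  exact ⟨rfl, fun i hi => h.2.1 (i + 1) (by omega), fun i hi => h.2.2 (i + 1) (by omega)⟩

theorem cons (h : IsSaturatedChain μ ν c) (hμ : μ ∈ oneBoxExtensions ν l) :
    IsSaturatedChain l ν (fun | 0 => l | i + 1 => c i) := by
  obtain ⟨hμν, hle, hcard⟩ := YoungDiagram.mem_oneBoxExtensions.1 hμ
  have := card_le_card_of_le hμν
  refine ⟨rfl, fun i hi => ?_, fun i hi => ?_⟩
  · cases i with
    | zero => rw [← h.1] at hle hcard; exact ⟨hle, hcard.symm⟩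
    | succ i => exact h.2.1 i (by omega)
  · cases i with
    | zero => omega
    | succ i => exact h.2.2 i (by omega)

end IsSaturatedChain

instance (μ ν : YoungDiagram) : Finite {c // IsSaturatedChain μ ν c} := by
  refine Finite.of_injective
    (fun (c : {c // IsSaturatedChain μ ν c}) (i : Fin (ν.card - μ.card + 1)) =>
      (⟨c.1 i, c.2.le i⟩ : Set.Iic ν)) fun c d hcd => Subtype.ext <| funext fun i => ?_
  rcases le_or_gt i (ν.card - μ.card) with hi | hi
  · exact congrArg Subtype.val (congrFun hcd ⟨i, by omega⟩)
  · rw [c.2.2.2 i hi.le, d.2.2.2 i hi.le]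

def saturatedChainEquiv {l ν : YoungDiagram} (hlt : l.card < ν.card) :
    {c // IsSaturatedChain l ν c} ≃ Σ μ : oneBoxExtensions ν l, {c // IsSaturatedChain μ ν c} where
  toFun c := ⟨⟨c.1 1, c.2.one_mem_oneBoxExtensions hlt⟩, ⟨fun i => c.1 (i + 1), c.2.tail hlt⟩⟩
  invFun x := ⟨fun | 0 => l | i + 1 => x.2.1 i, x.2.2.cons x.1.2⟩
  left_inv c := Subtype.ext <| funext fun
    | 0 => c.2.1.symm
    | _ + 1 => rfl
  right_inv := by
    rintro ⟨⟨μ, hμ⟩, d, hd⟩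
    exact Sigma.subtype_ext (Subtype.ext hd.1) rfl

theorem dimSkew_eq_sum_dimSkew {l ν : YoungDiagram} (hlt : l.card < ν.card) :
    dimSkew l ν = ∑ μ ∈ oneBoxExtensions ν l, dimSkew μ ν := by
  rw [dimSkew_eq_card, Nat.card_congr (saturatedChainEquiv hlt), Nat.card_sigma,
    ← sum_coe_sort (oneBoxExtensions ν l) (dimSkew · ν)]
  rfl

theorem contentProd_sdiff_mul_contentProd_sdiff {R : Type*} [CommRing R] (z z' : R)
    {s t u : Finset (ℕ × ℕ)} (hst : s ⊆ t) (htu : t ⊆ u) :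
    contentProd z z' (u \ t) * contentProd z z' (t \ s) = contentProd z z' (u \ s) := by
  simp only [contentProd]
  rw [← prod_union (sdiff_disjoint.mono_right sdiff_subset), sdiff_union_sdiff_cancel htu hst]

theorem neg_one_pow_div_factorial_succ {K : Type*} [Field K] [CharZero K] (k : ℕ) :
    ((-1 : K) ^ (k + 1) / (k + 1).factorial) * (k + 1 : ℕ) = -((-1) ^ k / k.factorial) := by
  rw [Nat.factorial_succ, pow_succ, Nat.cast_mul]
  field_simp

theorem sum_lagC_mul_contentProd (z z' : ℂ) {l ν : YoungDiagram} (hl : l ≤ ν) :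
    ∑ μ ∈ oneBoxExtensions ν l, LagC z z' ν μ * contentProd z z' (μ.cells \ l.cells) =
      ((l.card : ℂ) - ν.card) * LagC z z' ν l := by
  obtain hc | hlt := (card_le_card_of_le hl).eq_or_lt
  · rw [hc, sub_self, zero_mul]
    refine sum_eq_zero fun μ hμ => ?_
    obtain ⟨hμν, -, hcard⟩ := YoungDiagram.mem_oneBoxExtensions.1 hμ
    have := card_le_card_of_le hμν
    omega
  obtain ⟨k, hk⟩ : ∃ k, ν.card - l.card = k + 1 := ⟨ν.card - l.card - 1, by omega⟩
  have hterm : ∀ μ ∈ oneBoxExtensions ν l,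
      LagC z z' ν μ * contentProd z z' (μ.cells \ l.cells) =
        (-1) ^ k / k.factorial * contentProd z z' (ν.cells \ l.cells) * dimSkew μ ν := by
    intro μ hμ
    obtain ⟨hμν, hlμ, hcard⟩ := YoungDiagram.mem_oneBoxExtensions.1 hμ
    have := card_le_card_of_le hμν
    rw [LagC, show ν.card - μ.card = k by omega, mul_assoc,
      contentProd_sdiff_mul_contentProd_sdiff z z' (cells_subset_iff.2 hlμ)
        (cells_subset_iff.2 hμν)]
    ring
  have hcard : (l.card : ℂ) - ν.card = -((k + 1 : ℕ) : ℂ) := by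
    rw [← hk, Nat.cast_sub (card_le_card_of_le hl)]
    ring
  rw [sum_congr rfl hterm, ← mul_sum, ← Nat.cast_sum, ← dimSkew_eq_sum_dimSkew hlt, hcard,
    LagC, hk]
  linear_combination (contentProd z z' (ν.cells \ l.cells) * dimSkew l ν) *
    neg_one_pow_div_factorial_succ (K := ℂ) k

theorem finsum_le_eq_sum_Iic {α M : Type*} [Preorder α] [LocallyFiniteOrderBot α]
    [AddCommMonoid M] (f : α → M) (a : α) : ∑ᶠ (x : α) (_ : x ≤ a), f x = ∑ x ∈ Iic a, f x :=
  finsum_cond_eq_sum_of_cond_iff f fun _ => mem_Iic.symm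

theorem lagC_smul_eigen {M : Type*} [AddCommGroup M] [Module ℂ M] (z z' : ℂ)
    (S : YoungDiagram → M) (D : M →ₗ[ℂ] M)
    (hD : ∀ ν : YoungDiagram, D (S ν) =
      -(ν.card : ℂ) • S ν +
        ∑ᶠ (μ : YoungDiagram) (_ : μ ≤ ν ∧ μ.card + 1 = ν.card),
          contentProd z z' (ν.cells \ μ.cells) • S μ)
    (ν : YoungDiagram) :
    D (∑ μ ∈ Iic ν, LagC z z' ν μ • S μ) =
      -(ν.card : ℂ) • ∑ μ ∈ Iic ν, LagC z z' ν μ • S μ := by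
  have hDIic : ∀ μ ∈ Iic ν, D (S μ) = -(μ.card : ℂ) • S μ +
      ∑ l ∈ Iic ν, if l ≤ μ ∧ l.card + 1 = μ.card then
        contentProd z z' (μ.cells \ l.cells) • S l else 0 := by
    intro μ hμ
    rw [hD, ← sum_filter]
    congr 1
    refine finsum_cond_eq_sum_of_cond_iff _ fun {l} _ => ?_
    rw [mem_filter, mem_Iic]
    exact ⟨fun h => ⟨h.1.trans (mem_Iic.1 hμ), h⟩, And.right⟩
  calc D (∑ μ ∈ Iic ν, LagC z z' ν μ • S μ)
      = ∑ μ ∈ Iic ν, (-(μ.card : ℂ) * LagC z z' ν μ) • S μ +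
          ∑ l ∈ Iic ν, ∑ μ ∈ Iic ν, if l ≤ μ ∧ l.card + 1 = μ.card then
            (LagC z z' ν μ * contentProd z z' (μ.cells \ l.cells)) • S l else 0 := by
        simp only [map_sum, map_smul]
        rw [sum_comm, ← sum_add_distrib]
        refine sum_congr rfl fun μ hμ => ?_
        simp only [hDIic μ hμ, smul_add, smul_sum, smul_ite, smul_zero, smul_smul, mul_comm]
    _ = ∑ l ∈ Iic ν, (-(ν.card : ℂ) * LagC z z' ν l) • S l := by
        rw [← sum_add_distrib]
        refine sum_congr rfl fun l hl => ?_
        rw [← sum_filter, ← sum_smul, ← add_smul]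
        congr 1
        rw [show {μ ∈ Iic ν | l ≤ μ ∧ l.card + 1 = μ.card} = oneBoxExtensions ν l from rfl,
          sum_lagC_mul_contentProd z z' (mem_Iic.1 hl)]
        ring
    _ = -(ν.card : ℂ) • ∑ μ ∈ Iic ν, LagC z z' ν μ • S μ := by
        simp only [smul_sum, smul_smul]

/-- If `D` is the linear operator on `Λ` acting on the Schur basis by
`D S_ν = -|ν| S_ν + ∑_{□∈ν⁻} (z+c(□))(z'+c(□)) S_{ν∖□}` (the sum being over the
diagrams `μ ⊆ ν` obtained by removing one corner box), then the Laguerre symmetric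
functions are eigenvectors: `D 𝕃_ν = -|ν| 𝕃_ν`. -/
theorem laguerreSF_eigen (z z' : ℂ)
    (D : MvPolynomial ℕ ℂ →ₗ[ℂ] MvPolynomial ℕ ℂ)
    (hD : ∀ ν : YoungDiagram, D (SchurF ν) =
      -(ν.card : ℂ) • SchurF ν +
        ∑ᶠ (μ : YoungDiagram) (_ : μ ≤ ν ∧ μ.card + 1 = ν.card),
          contentProd z z' (ν.cells \ μ.cells) • SchurF μ)
    (ν : YoungDiagram) :
    D (LaguerreSF z z' ν) = -(ν.card : ℂ) • LaguerreSF z z' ν := by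
  rw [LaguerreSF, finsum_le_eq_sum_Iic]
  exact lagC_smul_eigen z z' SchurF D hD ν
end

section
/- If z = z̄' are complex conjugates and nonreal, then for every Young diagram ν the product ∏_{□∈ν}(z+c(□))(z'+c(□)) is real and strictly positive; in particular the pair (z,z') is admissible. -/
open scoped BigOperators

/-- A pair `(z,z')` is admissible if both are nonzero and all the content
products are nonnegative (real). -/
def Admissible (z z' : ℂ) : Prop :=
  z ≠ 0 ∧ z' ≠ 0 ∧
    ∀ ν : YoungDiagram, ∃ r : ℝ, 0 ≤ r ∧ contentProd z z' ν.cells = (r : ℂ)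

/-- For the principal series `z' = z̄`, `z` nonreal, every content product
`∏_{□∈ν}(z+c(□))(z'+c(□))` is real and strictly positive; in particular
`(z, z̄)` is admissible. -/
theorem principal_series_admissible (z : ℂ) (hz : z.im ≠ 0) :
    (∀ ν : YoungDiagram, ∃ r : ℝ, 0 < r ∧
        contentProd z (starRingEnd ℂ z) ν.cells = (r : ℂ)) ∧
      Admissible z (starRingEnd ℂ z) := by
  have hz0 : z ≠ 0 := fun h => hz (by simp [h])
  have key : ∀ s : Finset (ℕ × ℕ), ∃ r : ℝ, 0 < r ∧ contentProd z (starRingEnd ℂ z) s = (r : ℂ) := by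
    intro s
    refine ⟨∏ b ∈ s, Complex.normSq (z + (((b.2 : ℤ) - (b.1 : ℤ) : ℤ) : ℂ)), ?_, ?_⟩
    · apply Finset.prod_pos
      intro b _
      apply Complex.normSq_pos.2
      intro h
      apply hz
      have : (z + (((b.2 : ℤ) - (b.1 : ℤ) : ℤ) : ℂ)).im = 0 := by rw [h]; simp
      simpa using this
    · unfold contentProd
      push_cast
      apply Finset.prod_congr rfl
      intro b _
      rw [Complex.normSq_eq_conj_mul_self, map_add]
      have : (starRingEnd ℂ) ((((b.2:ℤ) - (b.1:ℤ) : ℤ) : ℂ)) = (((b.2:ℤ) - (b.1:ℤ) : ℤ) : ℂ) := by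
        simp
      push_cast at this ⊢
      rw [this]
      ring
  refine ⟨fun ν => key ν.cells, hz0, by simpa using hz0, fun ν => ?_⟩
  obtain ⟨r, hr, h⟩ := key ν.cells
  exact ⟨r, hr.le, h⟩
end

section
/- For N ≥ 1, the functions φ_{ν|N} = det[φ_{ν_j+N-j}(x_i)]/V_N built from a system {φ_n} of orthogonal polynomials with respect to a measure w on ℝ are pairwise orthogonal with respect to the measure V_N² ∏_{i=1}^N w(dx_i) on the ordered region x_1 ≥ ... ≥ x_N: for distinct partitions ν ≠ μ of length ≤ N, ∫ φ_{ν|N} φ_{μ|N} V_N² ∏ w(dx_i) = 0. -/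
open scoped BigOperators

/-- The Vandermonde polynomial `∏_{i<j} (x_i - x_j)`. -/
noncomputable def vandermonde (N : ℕ) : MvPolynomial (Fin N) ℝ :=
  ∏ p ∈ Finset.univ.filter (fun p : Fin N × Fin N => p.1 < p.2),
    (MvPolynomial.X p.1 - MvPolynomial.X p.2)

/-- The alternating determinant `det[φ_{ν_j + N - j}(x_i)]` (0-indexed:
exponent `ν.rowLen j + (N - 1 - j)`). -/
noncomputable def phiDet (N : ℕ) (φ : ℕ → Polynomial ℝ) (ν : YoungDiagram) :
    MvPolynomial (Fin N) ℝ :=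
  Matrix.det (Matrix.of fun i j : Fin N =>
    Polynomial.aeval (MvPolynomial.X i) (φ (ν.rowLen j + (N - 1 - (j : ℕ)))))

/-- Elementary symmetric polynomial in `N` variables, extended by `0` to
negative indices (`e_0 = 1`, `e_k = 0` for `k > N` automatically). -/
noncomputable def esymmZ (N : ℕ) (k : ℤ) : MvPolynomial (Fin N) ℝ :=
  if k < 0 then 0 else MvPolynomial.esymm (Fin N) ℝ k.toNat

/-- The Schur polynomial in `N` variables via the Nägelsbach–Kostka formula
`s_ν = det[e_{ν'_i - i + j}]`. -/
noncomputable def schurPoly (N : ℕ) (ν : YoungDiagram) : MvPolynomial (Fin N) ℝ :=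
  Matrix.det (Matrix.of fun i j : Fin (ν.rowLen 0) =>
    esymmZ N ((ν.colLen i : ℤ) - (i : ℤ) + (j : ℤ)))

/-!
After clearing the Vandermonde factors the integrand is `det[f_j(x_i)] · det[g_j(x_i)]` with
`f_j = φ_{ν_j+N-j}` and `g_j = φ_{μ_j+N-j}`. This function is symmetric in `x` and vanishes
on the diagonals, so its integral over the chamber `x_1 ≥ … ≥ x_N` is `1/N!` times its integral
over `ℝ^N`, which by Andréief's identity is `N! · det[∫ f_i g_j dw]`. Since `ν ≠ μ`, some exponent
`ν_i + N - i` differs from every `μ_j + N - j`, so by orthogonality row `i` of this Gram matrix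
vanishes.
-/

open MeasureTheory

lemma Polynomial.integrable_eval {w : Measure ℝ}
    (hmom : ∀ k : ℕ, Integrable (fun x : ℝ => x ^ k) w) (p : Polynomial ℝ) :
    Integrable (fun t => p.eval t) w := by
  simp_rw [Polynomial.eval_eq_sum_range]
  exact integrable_finsetSum _ fun k _ => (hmom k).const_mul _

lemma MvPolynomial.eval_aeval_X {σ R : Type*} [CommRing R] (x : σ → R) (p : Polynomial R)
    (i : σ) : MvPolynomial.eval x (Polynomial.aeval (MvPolynomial.X i) p) = p.eval (x i) := by
  simpa using (Polynomial.aeval_algHom_apply (MvPolynomial.aeval x) (MvPolynomial.X i) p).symm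

lemma Int.cast_units_mul_self {R : Type*} [Ring R] (u : ℤˣ) : ((u : ℤ) : R) * u = 1 := by
  rw [← Int.cast_mul, ← Units.val_mul, Int.units_mul_self, Units.val_one, Int.cast_one]

def Matrix.alternant {ι α R : Type*} (f : ι → α → R) (x : ι → α) : Matrix ι ι R :=
  Matrix.of fun i j => f j (x i)

namespace Matrix

variable {ι α R : Type*} [Fintype ι] [DecidableEq ι] [CommRing R]

lemma det_eq_sum_sign_mul_prod_apply_perm (M : Matrix ι ι R) :
    M.det = ∑ σ : Equiv.Perm ι, Equiv.Perm.sign σ * ∏ i, M i (σ i) := by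
  rw [← det_transpose, det_apply']
  rfl

lemma sum_sum_sign_mul_sign_mul_prod_apply_perm (G : Matrix ι ι R) :
    ∑ σ : Equiv.Perm ι, ∑ τ : Equiv.Perm ι,
      (Equiv.Perm.sign σ * Equiv.Perm.sign τ : R) * ∏ i, G (σ i) (τ i)
      = (Fintype.card ι).factorial * G.det := by
  have hrow : ∀ σ : Equiv.Perm ι, ∑ τ : Equiv.Perm ι,
      (Equiv.Perm.sign σ * Equiv.Perm.sign τ : R) * ∏ i, G (σ i) (τ i) = G.det := by
    intro σ
    calc _ = (Equiv.Perm.sign σ : R) * (G.submatrix σ id).det := by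
          simp [det_eq_sum_sign_mul_prod_apply_perm (G.submatrix σ id), Finset.mul_sum, mul_assoc]
      _ = G.det := by rw [det_permute, ← mul_assoc, Int.cast_units_mul_self, one_mul]
  rw [Finset.sum_congr rfl fun σ _ => hrow σ, Finset.sum_const, Finset.card_univ,
    Fintype.card_perm, nsmul_eq_mul]

lemma det_alternant_mul_det_alternant (f g : ι → α → R) (x : ι → α) :
    (alternant f x).det * (alternant g x).det = ∑ σ : Equiv.Perm ι, ∑ τ : Equiv.Perm ι,
      (Equiv.Perm.sign σ * Equiv.Perm.sign τ : R) * ∏ i, f (σ i) (x i) * g (τ i) (x i) := by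
  simp_rw [det_eq_sum_sign_mul_prod_apply_perm (alternant _ x), Finset.sum_mul_sum,
    Finset.prod_mul_distrib]
  refine Finset.sum_congr rfl fun σ _ => Finset.sum_congr rfl fun τ _ => ?_
  simp only [alternant, of_apply]
  ring

lemma det_alternant_mul_det_alternant_comp_perm (f g : ι → α → R) (σ : Equiv.Perm ι)
    (x : ι → α) :
    (alternant f (x ∘ σ)).det * (alternant g (x ∘ σ)).det
      = (alternant f x).det * (alternant g x).det := by
  rw [show alternant f (x ∘ σ) = (alternant f x).submatrix σ id from rfl,
    show alternant g (x ∘ σ) = (alternant g x).submatrix σ id from rfl, det_permute, det_permute,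
    mul_mul_mul_comm, Int.cast_units_mul_self, one_mul]

lemma det_alternant_eq_zero_of_not_injective (f : ι → α → R) {x : ι → α}
    (hx : ¬ Function.Injective x) : (alternant f x).det = 0 := by
  obtain ⟨i, j, hxij, hij⟩ : ∃ i j, x i = x j ∧ i ≠ j := by
    simpa [Function.Injective] using hx
  exact det_zero_of_row_eq hij (funext fun k => by simp [alternant, hxij])

end Matrix

section Andreief

open Matrix

variable {ι α 𝕜 : Type*} [Fintype ι] [DecidableEq ι] [RCLike 𝕜] [MeasurableSpace α]
  (μ : Measure α) [SigmaFinite μ] {f g : ι → α → 𝕜}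

lemma integrable_det_alternant_mul_det_alternant
    (hfg : ∀ i j, Integrable (fun t => f i t * g j t) μ) :
    Integrable (fun x => (alternant f x).det * (alternant g x).det)
      (Measure.pi fun _ : ι => μ) := by
  simp_rw [det_alternant_mul_det_alternant]
  exact integrable_finsetSum _ fun σ _ => integrable_finsetSum _ fun τ _ =>
    (Integrable.fintype_prod fun i => hfg (σ i) (τ i)).const_mul _

theorem integral_det_alternant_mul_det_alternant
    (hfg : ∀ i j, Integrable (fun t => f i t * g j t) μ) :
    ∫ x, (alternant f x).det * (alternant g x).det ∂(Measure.pi fun _ : ι => μ)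
      = (Fintype.card ι).factorial * (of fun i j => ∫ t, f i t * g j t ∂μ).det := by
  have hint : ∀ σ τ : Equiv.Perm ι, Integrable
      (fun x : ι → α => ∏ i, f (σ i) (x i) * g (τ i) (x i)) (Measure.pi fun _ : ι => μ) :=
    fun σ τ => Integrable.fintype_prod fun i => hfg (σ i) (τ i)
  simp_rw [det_alternant_mul_det_alternant]
  rw [integral_finsetSum _ fun σ _ => integrable_finsetSum _ fun τ _ => (hint σ τ).const_mul _,
    ← sum_sum_sign_mul_sign_mul_prod_apply_perm]
  refine Finset.sum_congr rfl fun σ _ => ?_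
  rw [integral_finsetSum _ fun τ _ => (hint σ τ).const_mul _]
  refine Finset.sum_congr rfl fun τ _ => ?_
  rw [integral_const_mul, integral_fintype_prod_eq_prod (fun i t => f (σ i) t * g (τ i) t)]
  rfl

end Andreief

lemma Tuple.existsUnique_antitone_comp_perm {n : ℕ} {α : Type*} [LinearOrder α]
    {x : Fin n → α} (hx : Function.Injective x) :
    ∃! σ : Equiv.Perm (Fin n), Antitone (x ∘ σ) := by
  have hsort : Antitone (x ∘ Fin.revPerm.trans (Tuple.sort x)) :=
    (Tuple.monotone_sort x).comp_antitone Fin.rev_anti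
  exact ⟨_, hsort, fun σ hσ => Equiv.ext fun i => hx (congrFun (Tuple.unique_antitone hσ hsort) i)⟩

lemma MeasurableEquiv.coe_piCongrLeft_perm_symm {ι α : Type*} [MeasurableSpace α]
    (σ : Equiv.Perm ι) :
    ⇑(MeasurableEquiv.piCongrLeft (fun _ : ι => α) σ.symm) = fun x => x ∘ σ := by
  ext x i
  simpa [MeasurableEquiv.coe_piCongrLeft] using
    Equiv.piCongrLeft_apply_apply (fun _ : ι => α) σ.symm x (σ i)

section Symmetrization

variable {ι α E : Type*} [LinearOrder α]

lemma measurableSet_setOf_antitone [Preorder ι] [Countable ι] [MeasurableSpace α] [TopologicalSpace α]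
    [OrderClosedTopology α] [SecondCountableTopology α] [OpensMeasurableSpace α] :
    MeasurableSet {x : ι → α | Antitone x} := by
  simp only [Antitone, Set.ofPred_forall]
  exact .iInter fun i => .iInter fun j => .iInter fun _ =>
    measurableSet_le (measurable_pi_apply j) (measurable_pi_apply i)

lemma setIntegral_antitone_comp_perm [Fintype ι] [Preorder ι] [MeasurableSpace α]
    [NormedAddCommGroup E] [NormedSpace ℝ E] (μ : Measure α) [SigmaFinite μ] {F : (ι → α) → E}
    (hF : ∀ (σ : Equiv.Perm ι) x, F (x ∘ σ) = F x) (σ : Equiv.Perm ι) :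
    ∫ x in {x | Antitone (x ∘ σ)}, F x ∂(Measure.pi fun _ : ι => μ)
      = ∫ x in {x | Antitone x}, F x ∂(Measure.pi fun _ : ι => μ) := by
  have := (measurePreserving_piCongrLeft (fun _ : ι => μ) σ.symm).setIntegral_preimage_emb
    (MeasurableEquiv.measurableEmbedding _) F {x | Antitone x}
  simpa only [MeasurableEquiv.coe_piCongrLeft_perm_symm, Set.preimage_ofPred_eq, hF] using this

lemma sum_indicator_antitone_comp_perm [AddCommMonoid E] {N : ℕ} {F : (Fin N → α) → E}
    (hF : ∀ x, ¬ Function.Injective x → F x = 0) (x : Fin N → α) :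
    ∑ σ : Equiv.Perm (Fin N), {y | Antitone (y ∘ σ)}.indicator F x = F x := by
  by_cases hx : Function.Injective x
  · obtain ⟨σ, hσ, huniq⟩ := Tuple.existsUnique_antitone_comp_perm hx
    rw [Finset.sum_eq_single σ (fun τ _ hτ => Set.indicator_of_notMem (fun h => hτ (huniq τ h)) F)
      (by simp), Set.indicator_of_mem hσ]
  · simp [Set.indicator_apply, hF x hx]

theorem integral_eq_factorial_smul_setIntegral_antitone [MeasurableSpace α] [TopologicalSpace α]
    [OrderClosedTopology α] [SecondCountableTopology α] [OpensMeasurableSpace α]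
    [NormedAddCommGroup E] [NormedSpace ℝ E] {N : ℕ} (μ : Measure α) [SigmaFinite μ]
    {F : (Fin N → α) → E} (hF : Integrable F (Measure.pi fun _ => μ))
    (hperm : ∀ (σ : Equiv.Perm (Fin N)) x, F (x ∘ σ) = F x)
    (hdiag : ∀ x, ¬ Function.Injective x → F x = 0) :
    ∫ x, F x ∂(Measure.pi fun _ => μ)
      = N.factorial • ∫ x in {x | Antitone x}, F x ∂(Measure.pi fun _ => μ) := by
  have hmeas : ∀ σ : Equiv.Perm (Fin N), MeasurableSet {x : Fin N → α | Antitone (x ∘ σ)} :=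
    fun σ => measurableSet_setOf_antitone.preimage
      (measurable_pi_lambda _ fun i => measurable_pi_apply (σ i))
  calc ∫ x, F x ∂(Measure.pi fun _ => μ)
      = ∫ x, ∑ σ : Equiv.Perm (Fin N), {y | Antitone (y ∘ σ)}.indicator F x
          ∂(Measure.pi fun _ => μ) := by simp_rw [sum_indicator_antitone_comp_perm hdiag]
    _ = ∑ σ : Equiv.Perm (Fin N),
          ∫ x in {x | Antitone (x ∘ σ)}, F x ∂(Measure.pi fun _ => μ) := by
        rw [integral_finsetSum _ fun σ _ => hF.indicator (hmeas σ)]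
        simp_rw [integral_indicator (hmeas _)]
    _ = N.factorial • ∫ x in {x | Antitone x}, F x ∂(Measure.pi fun _ => μ) := by
        simp_rw [setIntegral_antitone_comp_perm μ hperm, Finset.sum_const, Finset.card_univ,
          Fintype.card_perm, Fintype.card_fin]

end Symmetrization

namespace YoungDiagram

/-- The exponent `ν_j + N - j` of the paper, with rows indexed from `0`. -/
def shiftedRowLen (ν : YoungDiagram) (N : ℕ) (j : Fin N) : ℕ :=
  ν.rowLen j + (N - 1 - j)

lemma shiftedRowLen_strictAnti (ν : YoungDiagram) (N : ℕ) : StrictAnti (ν.shiftedRowLen N) := by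
  intro i j hij
  have := ν.rowLen_anti i j hij.le
  have := j.isLt
  simp only [shiftedRowLen]
  omega

lemma rowLen_eq_zero_of_colLen_le {ν : YoungDiagram} {i : ℕ} (h : ν.colLen 0 ≤ i) :
    ν.rowLen i = 0 := by
  by_contra hne
  have hmem : (i, 0) ∈ ν := mem_iff_lt_rowLen.2 (Nat.pos_of_ne_zero hne)
  exact (mem_iff_lt_colLen.1 hmem).not_ge h

lemma eq_of_rowLen_eq {ν μ : YoungDiagram} {N : ℕ} (hν : ν.colLen 0 ≤ N)
    (hμ : μ.colLen 0 ≤ N) (h : ∀ i < N, ν.rowLen i = μ.rowLen i) : ν = μ := by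
  have hrow : ∀ i, ν.rowLen i = μ.rowLen i := fun i => by
    by_cases hi : i < N
    · exact h i hi
    · rw [rowLen_eq_zero_of_colLen_le (hν.trans (not_lt.1 hi)),
        rowLen_eq_zero_of_colLen_le (hμ.trans (not_lt.1 hi))]
  ext ⟨i, j⟩
  simp only [mem_cells, mem_iff_lt_rowLen, hrow]

lemma exists_shiftedRowLen_ne {ν μ : YoungDiagram} {N : ℕ} (hν : ν.colLen 0 ≤ N)
    (hμ : μ.colLen 0 ≤ N) (hne : ν ≠ μ) :
    ∃ i : Fin N, ∀ j : Fin N, ν.shiftedRowLen N i ≠ μ.shiftedRowLen N j := by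
  by_contra! h
  choose g hg using h
  have hg_inj : Function.Injective g := fun i j hij =>
    (shiftedRowLen_strictAnti ν N).injective (by rw [hg, hg, hij])
  have hrange : Set.range (ν.shiftedRowLen N) = Set.range (μ.shiftedRowLen N) := by
    rw [show ν.shiftedRowLen N = μ.shiftedRowLen N ∘ g from funext hg,
      (Finite.injective_iff_surjective.1 hg_inj).range_comp]
  have heq := ((shiftedRowLen_strictAnti ν N).range_inj (shiftedRowLen_strictAnti μ N)).1 hrange
  refine hne (eq_of_rowLen_eq hν hμ fun i hi => ?_)
  have := congrFun heq ⟨i, hi⟩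
  simp only [shiftedRowLen] at this
  omega

end YoungDiagram

lemma eval_phiDet (N : ℕ) (φ : ℕ → Polynomial ℝ) (ν : YoungDiagram) (x : Fin N → ℝ) :
    MvPolynomial.eval x (phiDet N φ ν)
      = (Matrix.alternant (fun j t => (φ (ν.shiftedRowLen N j)).eval t) x).det := by
  rw [phiDet, RingHom.map_det]
  congr 1
  ext i j
  simp [Matrix.alternant, MvPolynomial.eval_aeval_X, YoungDiagram.shiftedRowLen]

open MeasureTheory in
theorem phi_family_orthogonal_general (N : ℕ)
    (w : Measure ℝ) [SigmaFinite w]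
    (hmom : ∀ k : ℕ, Integrable (fun x : ℝ => x ^ k) w)
    (φ : ℕ → Polynomial ℝ)
    (horth : ∀ m n : ℕ, m ≠ n → ∫ x : ℝ, (φ m).eval x * (φ n).eval x ∂w = 0)
    (P : YoungDiagram → MvPolynomial (Fin N) ℝ)
    (hP : ∀ ν : YoungDiagram, ν.colLen 0 ≤ N → vandermonde N * P ν = phiDet N φ ν)
    (ν μ : YoungDiagram) (hν : ν.colLen 0 ≤ N) (hμ : μ.colLen 0 ≤ N) (hne : ν ≠ μ) :
    ∫ x in {x : Fin N → ℝ | ∀ i j : Fin N, i ≤ j → x j ≤ x i},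
      MvPolynomial.eval x (P ν * P μ * (vandermonde N) ^ 2)
      ∂(Measure.pi fun _ : Fin N => w) = 0 := by
  set f : YoungDiagram → Fin N → ℝ → ℝ := fun κ j t => (φ (κ.shiftedRowLen N j)).eval t
  have hintegrand : ∀ x, MvPolynomial.eval x (P ν * P μ * vandermonde N ^ 2)
      = (Matrix.alternant (f ν) x).det * (Matrix.alternant (f μ) x).det := fun x => by
    rw [← eval_phiDet, ← eval_phiDet, ← map_mul, ← hP ν hν, ← hP μ hμ]
    congr 1
    ring
  have hfg : ∀ i j, Integrable (fun t => f ν i t * f μ j t) w := fun i j => by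
    simpa [f] using Polynomial.integrable_eval hmom (φ (ν.shiftedRowLen N i) * φ _)
  obtain ⟨i₀, hi₀⟩ := YoungDiagram.exists_shiftedRowLen_ne hν hμ hne
  have hfull : ∫ x, (Matrix.alternant (f ν) x).det * (Matrix.alternant (f μ) x).det
      ∂(Measure.pi fun _ : Fin N => w) = 0 := by
    rw [integral_det_alternant_mul_det_alternant w hfg,
      Matrix.det_eq_zero_of_row_eq_zero i₀ fun j => horth _ _ (hi₀ j), mul_zero]
  have hchamber := integral_eq_factorial_smul_setIntegral_antitone w
    (integrable_det_alternant_mul_det_alternant w hfg)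
    (Matrix.det_alternant_mul_det_alternant_comp_perm _ _)
    fun x hx => by rw [Matrix.det_alternant_eq_zero_of_not_injective _ hx, zero_mul]
  rw [hfull, eq_comm, smul_eq_zero] at hchamber
  simp_rw [hintegrand]
  exact hchamber.resolve_left N.factorial_ne_zero

open MeasureTheory in
/-- The `N`-variate polynomials `φ_{ν|N} = det[φ_{ν_j+N-j}(x_i)]/V_N` built from
orthogonal polynomials `{φ_n}` for a measure `w` on `ℝ` with finite moments are
pairwise orthogonal w.r.t. the measure `V_N² ∏ w(dx_i)` on the region
`x_1 ≥ … ≥ x_N`. -/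
theorem phi_family_orthogonal (N : ℕ) (hN : 1 ≤ N)
    (w : Measure ℝ) [SigmaFinite w]
    (hmom : ∀ k : ℕ, Integrable (fun x : ℝ => x ^ k) w)
    (φ : ℕ → Polynomial ℝ) (hφ : ∀ n : ℕ, (φ n).degree = (n : ℕ))
    (horth : ∀ m n : ℕ, m ≠ n → ∫ x : ℝ, (φ m).eval x * (φ n).eval x ∂w = 0)
    (P : YoungDiagram → MvPolynomial (Fin N) ℝ)
    (hP : ∀ ν : YoungDiagram, ν.colLen 0 ≤ N → vandermonde N * P ν = phiDet N φ ν)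
    (ν μ : YoungDiagram) (hν : ν.colLen 0 ≤ N) (hμ : μ.colLen 0 ≤ N) (hne : ν ≠ μ) :
    ∫ x in {x : Fin N → ℝ | ∀ i j : Fin N, i ≤ j → x j ≤ x i},
      MvPolynomial.eval x (P ν * P μ * (vandermonde N) ^ 2)
      ∂(Measure.pi fun _ : Fin N => w) = 0 :=
  phi_family_orthogonal_general N w hmom φ horth P hP ν μ hν hμ hne
end
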